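/- arXiv:0911.1602 — 2 statements merged into one kernel-verified Lean document; each statement's English description precedes it below -/
import Mathlib

section
/- Let e_1,...,e_n be a global ∇-parallel orthonormal frame for a flat metric connection ∇ with skew-symmetric torsion T on a Riemannian manifold. Then each e_i is a Killing vector field, ∇^g_{e_k} e_l = −∇^g_{e_l} e_k, and [e_k,e_l] = 2∇^g_{e_k} e_l = −T(e_k,e_l). -/
/-- An abstract calculus of vector fields on a Riemannian manifold: `C` is the ring of smooth
functions, `X` the `C`-module of vector fields, `g` the Riemannian metric, `D` the directional
derivative, `bracket` the Lie bracket and `lc` the Levi-Civita connection `∇^g`. -/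
structure VectorFieldCalculus (C X : Type*) [CommRing C] [Algebra ℝ C]
    [AddCommGroup X] [Module C X] where
  g : X → X → C
  D : X → C → C
  bracket : X → X → X
  lc : X → X → X
  g_symm : ∀ a b, g a b = g b a
  g_add_left : ∀ a b c, g (a + b) c = g a c + g b c
  g_smul_left : ∀ (f : C) a b, g (f • a) b = f * g a b
  g_definite : ∀ a, g a a = 0 → a = 0
  D_add : ∀ v f h, D v (f + h) = D v f + D v h
  D_mul : ∀ v f h, D v (f * h) = f * D v h + h * D v f
  D_algebraMap : ∀ v (r : ℝ), D v (algebraMap ℝ C r) = 0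
  D_add_vec : ∀ v w f, D (v + w) f = D v f + D w f
  D_smul_vec : ∀ (f : C) v h, D (f • v) h = f * D v h
  bracket_antisymm : ∀ a b, bracket a b = - bracket b a
  bracket_jacobi : ∀ a b c,
    bracket (bracket a b) c + bracket (bracket b c) a + bracket (bracket c a) b = 0
  bracket_D : ∀ a b f, D (bracket a b) f = D a (D b f) - D b (D a f)
  bracket_leibniz : ∀ a (f : C) b, bracket a (f • b) = D a f • b + f • bracket a b
  lc_add : ∀ z a b, lc z (a + b) = lc z a + lc z b
  lc_smul : ∀ z (f : C) a, lc z (f • a) = D z f • a + f • lc z a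
  lc_add_vec : ∀ z w a, lc (z + w) a = lc z a + lc w a
  lc_smul_vec : ∀ (f : C) z a, lc (f • z) a = f • lc z a
  lc_metric : ∀ z a b, D z (g a b) = g (lc z a) b + g a (lc z b)
  lc_torsion_free : ∀ a b, lc a b - lc b a = bracket a b

/-- A vector field `k` is Killing iff `⟨∇_v k, w⟩ + ⟨∇_w k, v⟩ = 0` for all `v, w`. -/
def VectorFieldCalculus.IsKilling {C X : Type*} [CommRing C] [Algebra ℝ C]
    [AddCommGroup X] [Module C X] (V : VectorFieldCalculus C X) (k : X) : Prop :=
  ∀ v w, V.g (V.lc v k) w + V.g (V.lc w k) v = 0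


/-!
A `∇`-parallel field `e` satisfies `∇^g_a e = -(1/2) T(a, e)`. Total skew-symmetry of `T` makes
`a ↦ ∇^g_a e` skew-adjoint, i.e. `e` is Killing, and makes `∇^g_{e_k} e_l` antisymmetric in
`k, l`; torsion-freeness of `∇^g` then gives `[e_k, e_l] = 2 ∇^g_{e_k} e_l = -T(e_k, e_l)`.
-/

namespace VectorFieldCalculus

variable {C X : Type*} [CommRing C] [Algebra ℝ C] [AddCommGroup X] [Module C X]
  (V : VectorFieldCalculus C X)

def gLeft (b : X) : X →+ C :=
  AddMonoidHom.mk' (fun a => V.g a b) fun a a' => V.g_add_left a a' b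

theorem g_neg_left (a b : X) : V.g (-a) b = -V.g a b :=
  map_neg (V.gLeft b) a

theorem g_sub_left (a a' b : X) : V.g (a - a') b = V.g a b - V.g a' b :=
  map_sub (V.gLeft b) a a'

theorem eq_of_forall_g_eq {a a' : X} (h : ∀ b, V.g a b = V.g a' b) : a = a' := by
  refine sub_eq_zero.mp (V.g_definite _ ?_)
  rw [g_sub_left, h, sub_self]

theorem torsion_antisymm {t : X → X → X} (hskew : ∀ a b c, V.g (t a b) c = -V.g (t b a) c)
    (a b : X) : t a b = -t b a :=
  V.eq_of_forall_g_eq fun c => by rw [hskew, g_neg_left]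

theorem isKilling_of_lc_eq_smul_torsion {t : X → X → X}
    (hskew1 : ∀ a b c, V.g (t a b) c = -V.g (t b a) c)
    (hskew2 : ∀ a b c, V.g (t a b) c = -V.g (t a c) b)
    {k : X} (f : C) (hk : ∀ a, V.lc a k = f • t a k) : V.IsKilling k := by
  intro v w
  have hswap : V.g (t w k) v = -V.g (t v k) w := by
    rw [hskew2, hskew1, neg_neg, hskew2]
  rw [hk, hk, V.g_smul_left, V.g_smul_left, hswap]
  ring

theorem bracket_eq_two_smul_lc {a b : X} (h : V.lc a b = -V.lc b a) :
    V.bracket a b = (2 : C) • V.lc a b := by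
  rw [← V.lc_torsion_free, two_smul, sub_eq_add_neg, ← h]

end VectorFieldCalculus

theorem parallel_frame_killing_general {C X : Type*} [CommRing C] [Algebra ℝ C]
    [AddCommGroup X] [Module C X] {n : ℕ}
    (V : VectorFieldCalculus C X)
    (t : X → X → X)
    (hskew1 : ∀ a b c, V.g (t a b) c = - V.g (t b a) c)
    (hskew2 : ∀ a b c, V.g (t a b) c = - V.g (t a c) b)
    (nab : X → X → X)
    (hnab : ∀ a b, nab a b = V.lc a b + algebraMap ℝ C (1/2) • t a b)
    (e : Fin n → X)
    (hpar : ∀ i a, nab a (e i) = 0) :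
    (∀ i, V.IsKilling (e i))
    ∧ (∀ k l, V.lc (e k) (e l) = - V.lc (e l) (e k))
    ∧ (∀ k l, V.bracket (e k) (e l) = (2 : C) • V.lc (e k) (e l))
    ∧ (∀ k l, V.bracket (e k) (e l) = - t (e k) (e l)) := by
  set c : C := algebraMap ℝ C (1/2)
  have hlc : ∀ i a, V.lc a (e i) = (-c) • t a (e i) := fun i a => by
    rw [neg_smul, ← sub_eq_zero, sub_neg_eq_add, ← hnab, hpar]
  have hanti : ∀ k l, V.lc (e k) (e l) = -V.lc (e l) (e k) := fun k l => by
    rw [hlc, hlc, V.torsion_antisymm hskew1 (e k), smul_neg]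
  have htwo : (2 : C) * c = 1 := by
    rw [← map_ofNat (algebraMap ℝ C) 2, ← map_mul]
    norm_num
  refine ⟨fun i => V.isKilling_of_lc_eq_smul_torsion hskew1 hskew2 (-c) (hlc i), hanti,
    fun k l => V.bracket_eq_two_smul_lc (hanti k l), fun k l => ?_⟩
  rw [V.bracket_eq_two_smul_lc (hanti k l), hlc, smul_smul, mul_neg, htwo, neg_one_smul]

/-- If `e 1,…,e n` is a `∇`-parallel orthonormal frame for a flat metric
connection `∇ = ∇^g + (1/2)T` with skew torsion `T`, then each `e i` is Killing,
`∇^g_{e k} e l = -∇^g_{e l} e k` and `[e k, e l] = 2 ∇^g_{e k} e l = -T(e k, e l)`. -/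
theorem parallel_frame_killing {C X : Type*} [CommRing C] [Algebra ℝ C]
    [AddCommGroup X] [Module C X] {n : ℕ}
    (V : VectorFieldCalculus C X)
    (t : X → X → X)
    (hskew1 : ∀ a b c, V.g (t a b) c = - V.g (t b a) c)
    (hskew2 : ∀ a b c, V.g (t a b) c = - V.g (t a c) b)
    (nab : X → X → X)
    (hnab : ∀ a b, nab a b = V.lc a b + algebraMap ℝ C (1/2) • t a b)
    (hflat : ∀ a b c, nab a (nab b c) - nab b (nab a c) - nab (V.bracket a b) c = 0)
    (e : Fin n → X)
    (horth : ∀ i j, V.g (e i) (e j) = if i = j then 1 else 0)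
    (hspan : ∀ a, a = ∑ i, V.g a (e i) • e i)
    (hpar : ∀ i a, nab a (e i) = 0) :
    (∀ i, V.IsKilling (e i))
    ∧ (∀ k l, V.lc (e k) (e l) = - V.lc (e l) (e k))
    ∧ (∀ k l, V.bracket (e k) (e l) = (2 : C) • V.lc (e k) (e l))
    ∧ (∀ k l, V.bracket (e k) (e l) = - t (e k) (e l)) :=
  parallel_frame_killing_general V t hskew1 hskew2 nab hnab e hpar
end

section
/- Let T be a 3-form on a Euclidean vector space V such that the bilinear operation defined by ⟨T(X,Y),Z⟩ = T(X,Y,Z) satisfies the Jacobi identity, i.e. T(T(X,Y),Z) + T(T(Y,Z),X) + T(T(Z,X),Y) = 0 for all X,Y,Z. Then the 4-form σ_T(X,Y,Z,W) = ⟨T(X,Y),T(Z,W)⟩ + ⟨T(Y,Z),T(X,W)⟩ + ⟨T(Z,X),T(Y,W)⟩ vanishes identically. Conversely, if σ_T = 0 then the bracket T(·,·) satisfies the Jacobi identity. -/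
/-!
Skew-symmetry in both pairs of arguments makes `T` cyclically invariant, so
`⟨t (t X Y) Z, W⟩ = T (t X Y) Z W = T Z W (t X Y) = ⟨t X Y, t Z W⟩`. Summing cyclically over
`X, Y, Z` shows that `σ_T(X,Y,Z,W)` is the inner product of the Jacobiator of `X, Y, Z` with `W`,
and a vector vanishes iff its inner product with every `W` does.
-/

open scoped RealInnerProductSpace

theorem cyclic_of_skew {α R : Type*} [InvolutiveNeg R] {T : α → α → α → R}
    (hskew1 : ∀ X Y Z, T X Y Z = - T Y X Z) (hskew2 : ∀ X Y Z, T X Y Z = - T X Z Y)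
    (X Y Z : α) : T X Y Z = T Y Z X := by
  rw [hskew1, hskew2, neg_neg]

section InvariantBracket

variable {E : Type*} [NormedAddCommGroup E] [InnerProductSpace ℝ E] {t : E → E → E}

theorem inner_bracket_bracket (hcyc : ∀ X Y Z, ⟪t X Y, Z⟫ = ⟪t Y Z, X⟫) (X Y Z W : E) :
    ⟪t (t X Y) Z, W⟫ = ⟪t X Y, t Z W⟫ := by
  rw [hcyc, real_inner_comm]

theorem inner_jacobiator (hcyc : ∀ X Y Z, ⟪t X Y, Z⟫ = ⟪t Y Z, X⟫) (X Y Z W : E) :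
    ⟪t (t X Y) Z + t (t Y Z) X + t (t Z X) Y, W⟫
      = ⟪t X Y, t Z W⟫ + ⟪t Y Z, t X W⟫ + ⟪t Z X, t Y W⟫ := by
  simp only [inner_add_left, inner_bracket_bracket hcyc]

theorem jacobi_iff_sigma_zero_of_cyclic (hcyc : ∀ X Y Z, ⟪t X Y, Z⟫ = ⟪t Y Z, X⟫) :
    (∀ X Y Z, t (t X Y) Z + t (t Y Z) X + t (t Z X) Y = 0)
      ↔ ∀ X Y Z W, ⟪t X Y, t Z W⟫ + ⟪t Y Z, t X W⟫ + ⟪t Z X, t Y W⟫ = 0 := by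
  simp only [← inner_jacobiator hcyc]
  constructor
  · intro hJ X Y Z W
    rw [hJ, inner_zero_left]
  · intro hσ X Y Z
    exact ext_inner_right ℝ fun W => by rw [hσ, inner_zero_left]

end InvariantBracket

theorem jacobi_iff_sigma_zero_general {n : ℕ}
    (T : EuclideanSpace ℝ (Fin n) → EuclideanSpace ℝ (Fin n) → EuclideanSpace ℝ (Fin n) → ℝ)
    (hskew1 : ∀ X Y Z, T X Y Z = - T Y X Z)
    (hskew2 : ∀ X Y Z, T X Y Z = - T X Z Y)
    (t : EuclideanSpace ℝ (Fin n) → EuclideanSpace ℝ (Fin n) → EuclideanSpace ℝ (Fin n))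
    (ht : ∀ X Y Z, (inner ℝ (t X Y) Z : ℝ) = T X Y Z) :
    (∀ X Y Z, t (t X Y) Z + t (t Y Z) X + t (t Z X) Y = 0)
      ↔ (∀ X Y Z W, (inner ℝ (t X Y) (t Z W) : ℝ) + inner ℝ (t Y Z) (t X W)
          + inner ℝ (t Z X) (t Y W) = 0) := by
  refine jacobi_iff_sigma_zero_of_cyclic fun X Y Z => ?_
  rw [ht, ht, cyclic_of_skew hskew1 hskew2]

/-- Let `T` be a 3-form on a Euclidean vector space, with associated bracket
`t X Y` defined by `⟨t X Y, Z⟩ = T(X,Y,Z)`.  Then `t` satisfies the Jacobi identity if and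
only if the 4-form
`σ_T(X,Y,Z,W) = ⟨T(X,Y),T(Z,W)⟩ + ⟨T(Y,Z),T(X,W)⟩ + ⟨T(Z,X),T(Y,W)⟩` vanishes identically. -/
theorem jacobi_iff_sigma_zero {n : ℕ}
    (T : EuclideanSpace ℝ (Fin n) → EuclideanSpace ℝ (Fin n) → EuclideanSpace ℝ (Fin n) → ℝ)
    (hlin : ∀ Y Z, IsLinearMap ℝ fun X => T X Y Z)
    (hskew1 : ∀ X Y Z, T X Y Z = - T Y X Z)
    (hskew2 : ∀ X Y Z, T X Y Z = - T X Z Y)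
    (t : EuclideanSpace ℝ (Fin n) → EuclideanSpace ℝ (Fin n) → EuclideanSpace ℝ (Fin n))
    (ht : ∀ X Y Z, (inner ℝ (t X Y) Z : ℝ) = T X Y Z) :
    (∀ X Y Z, t (t X Y) Z + t (t Y Z) X + t (t Z X) Y = 0)
      ↔ (∀ X Y Z W, (inner ℝ (t X Y) (t Z W) : ℝ) + inner ℝ (t Y Z) (t X W)
          + inner ℝ (t Z X) (t Y W) = 0) :=
  jacobi_iff_sigma_zero_general T hskew1 hskew2 t ht
end
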